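/- A closed convex cone K ⊆ ℝⁿ is facially dual complete if and only if for every proper face F of K, with L = span(F), the dual cone of F computed in the quotient space E*/L^⊥ equals the projection of K* onto that quotient: F|_L^* = Π_{E*/L^⊥}(K*). -/

import Mathlib

/-! With `L = span F`, both conditions are statements about the cone `K* + L^⊥`. Since `F` is a
face of the closed convex cone `K`, `K ∩ L = F`, so by the bipolar theorem a closed `K* + L^⊥`
equals `(K ∩ L)* = F*`; hence `K* + L^⊥` is closed iff it equals `F* = F* + L^⊥`. Sets invariant
under translation by `L^⊥` are determined by their orthogonal projections onto `L`, so this holds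
iff `P_L(K*) = P_L(F*)`, and `P_L(F*)` is the dual of `F` inside `L`. -/

/- Common definitions following "Facially Dual Complete (Nice) cones and
lexicographic tangents" by V. Roshchina and L. Tunçel. -/

open Set Filter
open scoped Pointwise

local notation "⟪" x ", " y "⟫" => @inner ℝ _ _ x y

variable {E : Type*} [NormedAddCommGroup E] [InnerProductSpace ℝ E]

/-- The tangent cone to a set `C` at `x`: the closure of the cone of feasible
directions `{d : x + ε • d ∈ C for some ε > 0}`. -/
def TangCone (x : E) (C : Set E) : Set E :=
  closure {d : E | ∃ ε : ℝ, 0 < ε ∧ x + ε • d ∈ C}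

/-- `F` is a face of the convex set `C`: a closed convex subset such that any open
segment of `C` whose interior meets `F` has both endpoints in `F`. -/
def IsFaceOf (F C : Set E) : Prop :=
  F ⊆ C ∧ Convex ℝ F ∧ IsClosed F ∧
    ∀ x ∈ F, ∀ y ∈ C, ∀ z ∈ C, x ∈ openSegment ℝ y z → y ∈ F ∧ z ∈ F

/-- A proper face: a nonempty face different from the whole set. -/
def IsProperFaceOf (F C : Set E) : Prop := IsFaceOf F C ∧ F.Nonempty ∧ F ≠ C

/-- The dual cone `K* = {s : ⟨s,x⟩ ≥ 0 for all x ∈ K}`. -/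
def DualCone' (K : Set E) : Set E := {s : E | ∀ x ∈ K, 0 ≤ ⟪s, x⟫}

/-- `F^⊥ = {s : ⟨s,x⟩ = 0 for all x ∈ F}`. -/
def PerpOf (F : Set E) : Set E := {s : E | ∀ x ∈ F, ⟪s, x⟫ = 0}

/-- Facial dual completeness: `K* + F^⊥` is closed for every proper face `F` of `K`. -/
def IsFDC (K : Set E) : Prop :=
  ∀ F : Set E, IsProperFaceOf F K → IsClosed (DualCone' K + PerpOf F)

/-- Tangential exposure: `T(x;C) ∩ span F = T(x;F)` for every proper face `F` and `x ∈ F`. -/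
def TangentiallyExposed (C : Set E) : Prop :=
  ∀ F : Set E, IsProperFaceOf F C → ∀ x ∈ F,
    TangCone x C ∩ (Submodule.span ℝ F : Set E) = TangCone x F

/-- The family of all tangent cones of members of a family of sets. -/
def TangFamily (𝒦 : Set (Set E)) : Set (Set E) :=
  {T | ∃ C ∈ 𝒦, ∃ x ∈ C, T = TangCone x C}

/-- `𝒯^k(C)`: the `k`-fold iterated tangent-cone families of `C`;
its members are the lexicographic tangent cones (of order `k`) of `C`. -/
def TangIter (C : Set E) : ℕ → Set (Set E)
  | 0 => {C}
  | k + 1 => TangFamily (TangIter C k)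

/-- Strong tangential exposure: `C` and all of its lexicographic tangent cones are
tangentially exposed. -/
def StronglyTangentiallyExposed (C : Set E) : Prop :=
  ∀ k : ℕ, ∀ T ∈ TangIter C k, TangentiallyExposed T

/-- `F` is an exposed face of `C`: the set of maximizers over `C` of some linear functional. -/
def IsExposedFaceOf (F C : Set E) : Prop :=
  ∃ p : E, F = {x ∈ C | ∀ y ∈ C, ⟪p, y⟫ ≤ ⟪p, x⟫}

/-- `C` is facially exposed: every proper face of `C` is exposed. -/
def FaciallyExposed (C : Set E) : Prop :=
  ∀ F : Set E, IsProperFaceOf F C → IsExposedFaceOf F C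

/-- The normal cone to `C` at `x`. -/
def NormalCone' (x : E) (C : Set E) : Set E := {s : E | ∀ y ∈ C, ⟪s, y - x⟫ ≤ 0}

/-- The minimal face of `C` containing `S`. -/
def MinimalFace (S C : Set E) : Set E := ⋂₀ {F : Set E | IsFaceOf F C ∧ S ⊆ F}

/-- `K` is a cone: closed under positive scalar multiplication. -/
def IsConeSet (K : Set E) : Prop := ∀ c : ℝ, 0 < c → ∀ x ∈ K, c • x ∈ K

open ProperCone (innerDual)
open scoped Topology

lemma PointedCone.exists_sub_of_mem_span {𝕜 M : Type*} [Field 𝕜] [LinearOrder 𝕜]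
    [IsStrictOrderedRing 𝕜] [AddCommGroup M] [Module 𝕜 M] (C : PointedCone 𝕜 M) {x : M}
    (hx : x ∈ Submodule.span 𝕜 (C : Set M)) : ∃ a ∈ C, ∃ b ∈ C, a - b = x := by
  induction hx using Submodule.span_induction with
  | mem x hx => exact ⟨x, hx, 0, C.zero_mem, sub_zero x⟩
  | zero => exact ⟨0, C.zero_mem, 0, C.zero_mem, sub_zero 0⟩
  | add x y _ _ hx hy =>
    obtain ⟨a, ha, b, hb, rfl⟩ := hx
    obtain ⟨c, hc, d, hd, rfl⟩ := hy
    exact ⟨a + c, C.add_mem ha hc, b + d, C.add_mem hb hd, add_sub_add_comm a c b d⟩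
  | smul r x _ hx =>
    obtain ⟨a, ha, b, hb, rfl⟩ := hx
    rcases le_total 0 r with hr | hr
    · exact ⟨r • a, C.smul_mem hr ha, r • b, C.smul_mem hr hb, (smul_sub r a b).symm⟩
    · refine ⟨(-r) • b, C.smul_mem (neg_nonneg.2 hr) hb, (-r) • a,
        C.smul_mem (neg_nonneg.2 hr) ha, ?_⟩
      rw [neg_smul, neg_smul, neg_sub_neg, smul_sub]

lemma mem_openSegment_zero_smul (x : E) {c : ℝ} (hc : 1 < c) :
    x ∈ openSegment ℝ 0 (c • x) :=
  ⟨1 - c⁻¹, c⁻¹, sub_pos.2 (inv_lt_one_of_one_lt₀ hc), inv_pos.2 (by linarith),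
    sub_add_cancel 1 c⁻¹, by rw [smul_zero, zero_add, smul_smul, inv_mul_cancel₀ (by positivity),
      one_smul]⟩

namespace IsConeSet

variable {K : Set E}

lemma zero_mem (hK : IsConeSet K) (hcl : IsClosed K) (hne : K.Nonempty) : (0 : E) ∈ K := by
  obtain ⟨x, hx⟩ := hne
  have hlim : Tendsto (fun c : ℝ => c • x) (𝓝[>] 0) (𝓝 0) :=
    ((continuous_id.smul continuous_const).tendsto' 0 0 (zero_smul ℝ x)).mono_left
      nhdsWithin_le_nhds
  exact hcl.mem_of_tendsto hlim (eventually_nhdsWithin_of_forall fun c hc => hK c hc x hx)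

lemma add_mem (hK : IsConeSet K) (hconv : Convex ℝ K) {x y : E} (hx : x ∈ K) (hy : y ∈ K) :
    x + y ∈ K := by
  have hmid := hconv hx hy (by norm_num : (0 : ℝ) ≤ 1 / 2) (by norm_num : (0 : ℝ) ≤ 1 / 2)
    (by norm_num)
  convert hK 2 two_pos _ hmid using 1
  module

def toPointedCone (hK : IsConeSet K) (hconv : Convex ℝ K) (h0 : (0 : E) ∈ K) :
    PointedCone ℝ E where
  carrier := K
  add_mem' := hK.add_mem hconv
  zero_mem' := h0
  smul_mem' := fun ⟨c, hc⟩ x hx => by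
    change c • x ∈ K
    rcases hc.eq_or_lt with rfl | hc
    · rwa [zero_smul]
    · exact hK c hc x hx

end IsConeSet

namespace IsFaceOf

variable {F K : Set E}

lemma zero_mem (hF : IsFaceOf F K) (hK : IsConeSet K) (h0 : (0 : E) ∈ K) (hne : F.Nonempty) :
    (0 : E) ∈ F := by
  obtain ⟨x, hx⟩ := hne
  exact (hF.2.2.2 x hx 0 h0 _ (hK 2 two_pos x (hF.1 hx))
    (mem_openSegment_zero_smul x one_lt_two)).1

lemma isConeSet (hF : IsFaceOf F K) (hK : IsConeSet K) (h0 : (0 : E) ∈ K) : IsConeSet F := by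
  intro c hc x hx
  rcases le_or_gt c 1 with hc1 | hc1
  · exact hF.2.1.smul_mem_of_zero_mem (hF.zero_mem hK h0 ⟨x, hx⟩) hx ⟨hc.le, hc1⟩
  · exact (hF.2.2.2 x hx 0 h0 _ (hK c hc x (hF.1 hx)) (mem_openSegment_zero_smul x hc1)).2

lemma inter_span_eq (hF : IsFaceOf F K) (hK : IsConeSet K) (h0 : (0 : E) ∈ K)
    (hne : F.Nonempty) : K ∩ Submodule.span ℝ F = F := by
  refine Subset.antisymm (fun y ⟨hyK, hyL⟩ => ?_) fun x hx => ⟨hF.1 hx, Submodule.subset_span hx⟩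
  have hFc := hF.isConeSet hK h0
  obtain ⟨a, ha, b, hb, rfl⟩ :=
    (hFc.toPointedCone hF.2.1 (hF.zero_mem hK h0 hne)).exists_sub_of_mem_span hyL
  have hseg : a ∈ openSegment ℝ ((2 : ℝ) • (a - b)) ((2 : ℝ) • b) :=
    ⟨1 / 2, 1 / 2, by norm_num, by norm_num, by norm_num, by module⟩
  have h2y := (hF.2.2.2 a ha _ (hK 2 two_pos _ hyK) _ (hK 2 two_pos _ (hF.1 hb)) hseg).1
  simpa [smul_smul] using hFc (1 / 2) (by norm_num) _ h2y

end IsFaceOf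

lemma dualCone'_add_perpOf (F : Set E) : DualCone' F + PerpOf F = DualCone' F := by
  refine Subset.antisymm ?_ fun s hs => ⟨s, hs, 0, fun x _ => inner_zero_left x, add_zero s⟩
  rintro _ ⟨s, hs, w, hw, rfl⟩ x hx
  rw [inner_add_left, hw x hx, add_zero]
  exact hs x hx

lemma dualCone'_add {S T : Set E} (hS : (0 : E) ∈ S) (hT : (0 : E) ∈ T) :
    DualCone' (S + T) = DualCone' S ∩ DualCone' T := by
  refine Subset.antisymm (fun s hs => ⟨fun x hx => ?_, fun y hy => ?_⟩) ?_
  · simpa using hs _ (add_mem_add hx hT)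
  · simpa using hs _ (add_mem_add hS hy)
  · rintro s ⟨hsS, hsT⟩ _ ⟨x, hx, y, hy, rfl⟩
    rw [inner_add_right]
    exact add_nonneg (hsS x hx) (hsT y hy)

lemma dualCone'_submodule (M : Submodule ℝ E) : DualCone' (M : Set E) = Mᗮ := by
  ext s
  refine ⟨fun hs => (M.mem_orthogonal' s).2 fun x hx => le_antisymm ?_ (hs x hx), fun hs x hx =>
    ((M.mem_orthogonal' s).1 hs x hx).ge⟩
  simpa [inner_neg_right] using hs (-x) (M.neg_mem hx)

lemma perpOf_eq_orthogonal_span (F : Set E) : PerpOf F = (Submodule.span ℝ F)ᗮ := by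
  ext s
  rw [SetLike.mem_coe, ← Submodule.span_singleton_le_iff_mem, ← Submodule.isOrtho_iff_le,
    Submodule.isOrtho_span]
  simp [PerpOf]

section Bipolar

variable [CompleteSpace E]

lemma coe_innerDual (S : Set E) : (innerDual S : Set E) = DualCone' S := by
  ext s
  simp only [SetLike.mem_coe, ProperCone.mem_innerDual, DualCone', mem_ofPred_eq, real_inner_comm]

lemma isClosed_dualCone' (S : Set E) : IsClosed (DualCone' S) :=
  coe_innerDual S ▸ (innerDual S).isClosed

lemma PointedCone.dualCone'_dualCone' (C : PointedCone ℝ E) (hC : IsClosed (C : Set E)) :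
    DualCone' (DualCone' (C : Set E)) = C := by
  have h := congrArg SetLike.coe (ProperCone.innerDual_innerDual ⟨C, hC⟩)
  rwa [coe_innerDual, coe_innerDual] at h

lemma IsConeSet.dualCone'_dualCone' {K : Set E} (hK : IsConeSet K) (hconv : Convex ℝ K)
    (hcl : IsClosed K) (h0 : (0 : E) ∈ K) : DualCone' (DualCone' K) = K :=
  (hK.toPointedCone hconv h0).dualCone'_dualCone' hcl

end Bipolar

namespace IsFaceOf

variable [CompleteSpace E] {F K : Set E} [(Submodule.span ℝ F).HasOrthogonalProjection]

lemma dualCone'_add_perpOf_eq_of_isClosed (hF : IsFaceOf F K) (hne : F.Nonempty)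
    (hKcl : IsClosed K) (hKconv : Convex ℝ K) (hK : IsConeSet K)
    (hcl : IsClosed (DualCone' K + PerpOf F)) : DualCone' K + PerpOf F = DualCone' F := by
  set L := Submodule.span ℝ F
  have h0 : (0 : E) ∈ K := hK.zero_mem hKcl (hne.mono hF.1)
  let C : PointedCone ℝ E := (innerDual K : PointedCone ℝ E) ⊔ Lᗮ
  have hC : (C : Set E) = DualCone' K + PerpOf F := by
    rw [Submodule.coe_sup, perpOf_eq_orthogonal_span, ← coe_innerDual]
    rfl
  calc DualCone' K + PerpOf F = DualCone' (DualCone' (DualCone' K + PerpOf F)) := by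
        rw [← hC, C.dualCone'_dualCone' (hC ▸ hcl)]
    _ = DualCone' (K ∩ L) := by
        rw [perpOf_eq_orthogonal_span,
          dualCone'_add (S := DualCone' K) (fun x _ => (inner_zero_left x).ge) Lᗮ.zero_mem,
          hK.dualCone'_dualCone' hKconv hKcl h0, dualCone'_submodule,
          Submodule.orthogonal_orthogonal]
    _ = DualCone' F := by rw [hF.inter_span_eq hK h0 hne]

lemma isClosed_dualCone'_add_perpOf_iff (hF : IsFaceOf F K) (hne : F.Nonempty)
    (hKcl : IsClosed K) (hKconv : Convex ℝ K) (hK : IsConeSet K) :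
    IsClosed (DualCone' K + PerpOf F) ↔ DualCone' K + PerpOf F = DualCone' F :=
  ⟨hF.dualCone'_add_perpOf_eq_of_isClosed hne hKcl hKconv hK,
    fun h => h ▸ isClosed_dualCone' F⟩

end IsFaceOf

namespace Submodule

variable (L : Submodule ℝ E) [L.HasOrthogonalProjection]

lemma add_orthogonal_eq_preimage_image_starProjection (S : Set E) :
    S + Lᗮ = L.starProjection ⁻¹' (L.starProjection '' S) := by
  ext v
  constructor
  · rintro ⟨s, hs, w, hw, rfl⟩
    exact ⟨s, hs, by rw [map_add, L.starProjection_apply_eq_zero_iff.2 hw, add_zero]⟩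
  · rintro ⟨s, hs, hsv⟩
    refine ⟨s, hs, v - s, L.starProjection_apply_eq_zero_iff.1 ?_, add_sub_cancel s v⟩
    rw [map_sub, hsv, sub_self]

lemma add_orthogonal_eq_add_orthogonal_iff {S T : Set E} :
    S + Lᗮ = T + Lᗮ ↔ L.starProjection '' S = L.starProjection '' T := by
  simp only [add_orthogonal_eq_preimage_image_starProjection]
  exact preimage_eq_preimage' (image_subset_range _ S) (image_subset_range _ T)

lemma starProjection_image_dualCone' {F : Set E} (hF : F ⊆ L) :
    L.starProjection '' DualCone' F = {s | s ∈ L ∧ ∀ x ∈ F, 0 ≤ ⟪s, x⟫} := by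
  ext s
  constructor
  · rintro ⟨t, ht, rfl⟩
    refine ⟨L.starProjection_apply_mem t, fun x hx => ?_⟩
    rw [inner_starProjection_left_eq_right, L.starProjection_eq_self_iff.2 (hF hx)]
    exact ht x hx
  · rintro ⟨hsL, hsF⟩
    exact ⟨s, hsF, L.starProjection_eq_self_iff.2 hsL⟩

end Submodule

/-- **Proposition.** A closed convex cone `K ⊆ ℝⁿ` is facially dual complete if and only if
for every proper face `F` of `K`, with `L = span F`, the dual cone of `F` computed in `L`
(identifying the quotient `E*/L^⊥` with `L` via orthogonal projection) equals the orthogonal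
projection of `K*` onto `L`. -/
theorem FDC_iff_dual_projection (n : ℕ) (K : Set (EuclideanSpace ℝ (Fin n)))
    (hKclosed : IsClosed K) (hKconv : Convex ℝ K) (hKcone : IsConeSet K) :
    IsFDC K ↔
      ∀ F : Set (EuclideanSpace ℝ (Fin n)), IsProperFaceOf F K →
        {s : EuclideanSpace ℝ (Fin n) | s ∈ Submodule.span ℝ F ∧ ∀ x ∈ F, 0 ≤ ⟪s, x⟫} =
          (fun v => ((Submodule.orthogonalProjection (Submodule.span ℝ F) v :
              Submodule.span ℝ F) : EuclideanSpace ℝ (Fin n))) '' DualCone' K := by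
  refine forall₂_congr fun F ⟨hF, hne, _⟩ => ?_
  set L := Submodule.span ℝ F
  rw [hF.isClosed_dualCone'_add_perpOf_iff hne hKclosed hKconv hKcone]
  conv_lhs => rw [← dualCone'_add_perpOf F, perpOf_eq_orthogonal_span]
  rw [L.add_orthogonal_eq_add_orthogonal_iff,
    L.starProjection_image_dualCone' Submodule.subset_span, eq_comm]
  rfl
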